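/- arXiv:1511.09381 — 6 statements merged into one kernel-verified Lean document; each statement's English description precedes it below -/
import Mathlib

section
/- Let n ≥ 2 and let S₃ : ℝ → Matrix (Fin (2n-2)) (Fin (2n-2)) ℝ be differentiable, symmetric-valued, satisfying (in the Loewner order) S₃'(t) - U S₃(t) - S₃(t) Uᵀ + R(t) + E + M(t) + S₃(t)² ≤ 0, where U is skew-symmetric, R(t) is symmetric with trace ≥ 0, E = (b²/4)·I, and M(t) is positive semidefinite. Then s₃(t) := trace(S₃(t)) satisfies s₃'(t) + s₃(t)²/(2n-2) ≤ 0. -/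
open Matrix

/-! Take the trace of the Riccati inequality. The skew term `U S + S Uᵀ` is traceless, the traces
of `R`, `E` and `M` are nonnegative, and for symmetric `S` the trace of `S²` is `∑ S_ij²`, which
dominates `∑ S_ii² ≥ (trace S)² / (2n - 2)` by Cauchy–Schwarz. -/

namespace Matrix

variable {m R : Type*} [Fintype m] [CommRing R]

theorem trace_mul_add_trace_mul_transpose_of_transpose_eq_neg {U : Matrix m m R}
    (hU : Uᵀ = -U) (S : Matrix m m R) : (U * S).trace + (S * Uᵀ).trace = 0 := by
  rw [hU, trace_mul_comm S, Matrix.neg_mul, trace_neg, add_neg_cancel]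

variable [LinearOrder R] [IsStrictOrderedRing R]

theorem sum_diag_sq_le_trace_mul_self {S : Matrix m m R} (hS : S.IsSymm) :
    ∑ i, S i i ^ 2 ≤ (S * S).trace := by
  refine Finset.sum_le_sum fun i _ => ?_
  have hsq : ∀ j, S i j * S j i = S i j ^ 2 := fun j => by
    rw [hS.apply i j, sq]
  simp only [diag_apply, mul_apply, hsq]
  exact Finset.single_le_sum (f := fun j => S i j ^ 2) (fun j _ => sq_nonneg _)
    (Finset.mem_univ i)

theorem sq_trace_le_card_mul_trace_mul_self {S : Matrix m m R} (hS : S.IsSymm) :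
    S.trace ^ 2 ≤ Fintype.card m * (S * S).trace :=
  (sq_sum_le_card_mul_sum_sq (s := Finset.univ)).trans <|
    mul_le_mul_of_nonneg_left (sum_diag_sq_le_trace_mul_self hS) (Nat.cast_nonneg _)

end Matrix

theorem trace_riccati_inequality_general (n : ℕ) (hn : 2 ≤ n) (b : ℝ)
    (S₃ S₃' R M : ℝ → Matrix (Fin (2 * n - 2)) (Fin (2 * n - 2)) ℝ)
    (U E : Matrix (Fin (2 * n - 2)) (Fin (2 * n - 2)) ℝ)
    (hsymm : ∀ t, (S₃ t).IsSymm)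
    (hU : Uᵀ = -U)
    (hR : ∀ t, (R t).IsSymm ∧ 0 ≤ (R t).trace)
    (hE : E = (b ^ 2 / 4) • (1 : Matrix (Fin (2 * n - 2)) (Fin (2 * n - 2)) ℝ))
    (hM : ∀ t, (M t).PosSemidef)
    (hineq : ∀ t,
      (-(S₃' t - U * S₃ t - S₃ t * Uᵀ + R t + E + M t + S₃ t * S₃ t)).PosSemidef) :
    ∀ t, (S₃' t).trace + (S₃ t).trace ^ 2 / (2 * (n : ℝ) - 2) ≤ 0 := by
  intro t
  have hcard : (Fintype.card (Fin (2 * n - 2)) : ℝ) = 2 * n - 2 := by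
    rw [Fintype.card_fin, Nat.cast_sub (by omega)]
    push_cast
    ring
  have hcard_pos : (0 : ℝ) < 2 * n - 2 := by
    have : (2 : ℝ) ≤ n := by exact_mod_cast hn
    linarith
  have hE_trace : 0 ≤ E.trace := by
    rw [hE, trace_smul, trace_one, smul_eq_mul]
    positivity
  have hS_sq : (S₃ t).trace ^ 2 / (2 * n - 2) ≤ (S₃ t * S₃ t).trace := by
    rw [div_le_iff₀' hcard_pos, ← hcard]
    exact sq_trace_le_card_mul_trace_mul_self (hsymm t)
  have hskew := trace_mul_add_trace_mul_transpose_of_transpose_eq_neg hU (S₃ t)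
  have htrace := (hineq t).trace_nonneg
  simp only [trace_neg, trace_add, trace_sub] at htrace
  linarith [(hR t).2, (hM t).trace_nonneg]

theorem trace_riccati_inequality (n : ℕ) (hn : 2 ≤ n) (b : ℝ)
    (S₃ S₃' R M : ℝ → Matrix (Fin (2 * n - 2)) (Fin (2 * n - 2)) ℝ)
    (U E : Matrix (Fin (2 * n - 2)) (Fin (2 * n - 2)) ℝ)
    (hderiv : ∀ t i j, HasDerivAt (fun s => S₃ s i j) (S₃' t i j) t)
    (hsymm : ∀ t, (S₃ t).IsSymm)
    (hU : Uᵀ = -U)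
    (hR : ∀ t, (R t).IsSymm ∧ 0 ≤ (R t).trace)
    (hE : E = (b ^ 2 / 4) • (1 : Matrix (Fin (2 * n - 2)) (Fin (2 * n - 2)) ℝ))
    (hM : ∀ t, (M t).PosSemidef)
    (hineq : ∀ t,
      (-(S₃' t - U * S₃ t - S₃ t * Uᵀ + R t + E + M t + S₃ t * S₃ t)).PosSemidef) :
    ∀ t, (S₃' t).trace + (S₃ t).trace ^ 2 / (2 * (n : ℝ) - 2) ≤ 0 :=
  trace_riccati_inequality_general n hn b S₃ S₃' R M U E hsymm hU hR hE hM hineq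
end

section
/- Let F : [0,1] → Matrix (Fin k) (Fin k) ℝ be continuously differentiable and symmetric-valued with F(t₀) ≥ 0 (positive semidefinite) for some t₀ in [0,1], and suppose F'(t) ≥ -F(t) B(t) - B(t)ᵀ F(t) for all t, where B : [0,1] → Matrix (Fin k) (Fin k) ℝ is continuous. Then F(t) ≥ 0 for all t in [t₀, 1]. -/
/-!
With `c` a bound for `|vᵀ B(t) v| / |v|²` on `[0, 1]`, the perturbations
`G_ε(t) = F(t) + ε e^{(2c+1)(t - t₀)} I` are positive definite at `t₀`. They stay positive
definite on `[t₀, 1]`: at a first time `t` where `G_ε(t)` is singular, a kernel vector `w` satisfies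
`F(t) w = -φ w` with `φ = ε e^{(2c+1)(t - t₀)}`, so the hypothesis gives
`wᵀ F'(t) w ≥ 2φ wᵀ B(t) w ≥ -2cφ |w|²` and `s ↦ wᵀ G_ε(s) w` has derivative at least `φ |w|² > 0`
at `t`, although it is nonnegative before `t` and vanishes at `t`. Letting `ε → 0` gives `F(t) ≥ 0`.
-/

open Matrix Set Filter Topology

lemma isClosed_setOf_forall_Ico {α : Type*} [LinearOrder α] [TopologicalSpace α]
    [ClosedIicTopology α] (a : α) (p : α → Prop) : IsClosed {t | ∀ u ∈ Ico a t, p u} := by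
  have : {t | ∀ u ∈ Ico a t, p u} = ⋂ u ∈ {u | a ≤ u ∧ ¬p u}, Iic u := by
    ext t
    simp only [mem_ofPred_eq, mem_Ico, mem_iInter, mem_Iic, and_imp]
    exact forall_congr' fun u => ⟨fun h hau hpu => not_lt.1 fun hut => hpu (h hau hut),
      fun h hau hut => by_contra fun hpu => (h hau hpu).not_gt hut⟩
  rw [this]
  exact isClosed_biInter fun u _ => isClosed_Iic

theorem HasDerivWithinAt.nonpos_of_isMinOn_Icc {g : ℝ → ℝ} {d a x : ℝ}
    (hg : HasDerivWithinAt g d (Icc a x) x) (hax : a < x) (hmin : IsMinOn g (Icc a x) x) :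
    d ≤ 0 := by
  have hcone : a - x ∈ posTangentConeAt (Icc a x) x :=
    sub_mem_posTangentConeAt_of_segment_subset ((segment_symm ℝ x a).subset.trans
      (segment_subset_Icc hax.le))
  have h := hmin.localize.hasFDerivWithinAt_nonneg hg.hasFDerivWithinAt hcone
  simp only [ContinuousLinearMap.toSpanSingleton_apply, smul_eq_mul] at h
  nlinarith

section QuadraticForm

variable {n : Type*} [Fintype n]

lemma abs_dotProduct_mulVec_le (A : Matrix n n ℝ) (v : n → ℝ) :
    |v ⬝ᵥ A *ᵥ v| ≤ (∑ i, ∑ j, |A i j|) * (v ⬝ᵥ v) := by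
  have hsq : ∀ i, v i * v i ≤ v ⬝ᵥ v := fun i =>
    Finset.single_le_sum (f := fun j => v j * v j) (fun j _ => mul_self_nonneg (v j))
      (Finset.mem_univ i)
  have hprod : ∀ i j, |v i * v j| ≤ v ⬝ᵥ v := fun i j =>
    abs_le.2 ⟨by nlinarith [sq_nonneg (v i + v j), hsq i, hsq j],
      by nlinarith [sq_nonneg (v i - v j), hsq i, hsq j]⟩
  calc |v ⬝ᵥ A *ᵥ v| = |∑ i, ∑ j, A i j * (v i * v j)| := by
        simp only [dotProduct, mulVec, Finset.mul_sum]
        congr 1; refine Finset.sum_congr rfl fun i _ => Finset.sum_congr rfl fun j _ => ?_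
        ring
    _ ≤ ∑ i, ∑ j, |A i j| * |v i * v j| := by
        refine (Finset.abs_sum_le_sum_abs _ _).trans (Finset.sum_le_sum fun i _ => ?_)
        refine (Finset.abs_sum_le_sum_abs _ _).trans (Finset.sum_le_sum fun j _ => ?_)
        rw [abs_mul]
    _ ≤ (∑ i, ∑ j, |A i j|) * (v ⬝ᵥ v) := by
        simp only [Finset.sum_mul]
        gcongr with i _ j _
        exact hprod i j

lemma dotProduct_mul_add_transpose_mul_mulVec_of_mulVec_eq_smul {A B : Matrix n n ℝ}
    (hA : A.IsSymm) {μ : ℝ} {w : n → ℝ} (hw : A *ᵥ w = μ • w) :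
    w ⬝ᵥ (A * B + Bᵀ * A) *ᵥ w = 2 * μ * (w ⬝ᵥ B *ᵥ w) := by
  have hwA : w ᵥ* A = μ • w := by rw [← mulVec_transpose, hA.eq, hw]
  rw [add_mulVec, dotProduct_add, ← mulVec_mulVec, ← mulVec_mulVec, dotProduct_mulVec w A,
    hwA, hw, mulVec_smul, dotProduct_smul, smul_dotProduct, mulVec_transpose,
    dotProduct_comm w (w ᵥ* B), ← dotProduct_mulVec, smul_eq_mul]
  ring

lemma isClosed_setOf_posSemidef : IsClosed {A : Matrix n n ℝ | A.PosSemidef} := by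
  simp only [posSemidef_iff_dotProduct_mulVec, ofPred_and, ofPred_forall]
  exact (isClosed_eq (by fun_prop) continuous_id).inter
    (isClosed_iInter fun x => isClosed_le continuous_const (by fun_prop))

lemma isOpen_setOf_forall_mem_sphere_dotProduct_mulVec_pos :
    IsOpen {A : Matrix n n ℝ | ∀ v ∈ Metric.sphere (0 : n → ℝ) 1, 0 < v ⬝ᵥ A *ᵥ v} := by
  refine isOpen_iff_mem_nhds.2 fun A hA =>
    (isCompact_sphere 0 1).eventually_forall_of_forall_eventually fun v hv => ?_
  have hcont : Continuous fun p : Matrix n n ℝ × (n → ℝ) => p.2 ⬝ᵥ p.1 *ᵥ p.2 := by fun_prop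
  exact hcont.continuousAt.eventually (lt_mem_nhds (hA v hv))

lemma posDef_of_forall_mem_sphere {A : Matrix n n ℝ} (hA : A.IsHermitian)
    (h : ∀ v ∈ Metric.sphere (0 : n → ℝ) 1, 0 < v ⬝ᵥ A *ᵥ v) : A.PosDef := by
  refine PosDef.of_dotProduct_mulVec_pos hA fun v hv => ?_
  have hnorm : 0 < ‖v‖ := norm_pos_iff.2 hv
  have hunit := h (‖v‖⁻¹ • v) (by simp [norm_smul, hnorm.ne'])
  rw [mulVec_smul, dotProduct_smul, smul_dotProduct, smul_eq_mul, smul_eq_mul] at hunit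
  simpa using pos_of_mul_pos_right (pos_of_mul_pos_right hunit (by positivity)) (by positivity)

lemma ContinuousWithinAt.eventually_posDef {X : Type*} [TopologicalSpace X]
    {G : X → Matrix n n ℝ} {S : Set X} {x : X} (hG : ContinuousWithinAt G S x)
    (hsymm : ∀ t ∈ S, (G t).IsHermitian) (hx : (G x).PosDef) :
    ∀ᶠ t in 𝓝[S] x, (G t).PosDef := by
  have hsphere := hG (isOpen_setOf_forall_mem_sphere_dotProduct_mulVec_pos.mem_nhds
    fun v hv => by simpa using hx.dotProduct_mulVec_pos (ne_zero_of_mem_unit_sphere ⟨v, hv⟩))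
  filter_upwards [hsphere, self_mem_nhdsWithin] with t ht hS
  exact posDef_of_forall_mem_sphere (hsymm t hS) ht

lemma posSemidef_of_forall_posDef_add_smul_one [DecidableEq n] {A : Matrix n n ℝ}
    (h : ∀ ε : ℝ, 0 < ε → (A + ε • (1 : Matrix n n ℝ)).PosDef) : A.PosSemidef := by
  have hlim : Tendsto (fun ε : ℝ => A + ε • (1 : Matrix n n ℝ)) (𝓝[>] 0) (𝓝 A) :=
    ((Continuous.tendsto' (by fun_prop) 0 A (by simp))).mono_left nhdsWithin_le_nhds
  exact isClosed_setOf_posSemidef.mem_of_tendsto hlim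
    (eventually_nhdsWithin_of_forall fun ε hε => (h ε hε).posSemidef)

lemma hasDerivWithinAt_dotProduct_mulVec {G : ℝ → Matrix n n ℝ} {G' : Matrix n n ℝ}
    {S : Set ℝ} {x : ℝ} (hG : ∀ i j, HasDerivWithinAt (fun s => G s i j) (G' i j) S x)
    (v w : n → ℝ) : HasDerivWithinAt (fun s => v ⬝ᵥ G s *ᵥ w) (v ⬝ᵥ G' *ᵥ w) S x := by
  simp only [dotProduct, mulVec, Finset.mul_sum]
  exact HasDerivWithinAt.fun_sum fun i _ => HasDerivWithinAt.fun_sum fun j _ =>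
    ((hG i j).mul_const (w j)).const_mul (v i)

lemma exists_abs_dotProduct_mulVec_le_of_continuousOn {B : ℝ → Matrix n n ℝ} {K : Set ℝ}
    (hK : IsCompact K) (hB : ∀ i j, ContinuousOn (fun t => B t i j) K) :
    ∃ c, ∀ t ∈ K, ∀ v, |v ⬝ᵥ B t *ᵥ v| ≤ c * (v ⬝ᵥ v) := by
  obtain ⟨c, hc⟩ := hK.exists_bound_of_continuousOn (f := fun t => ∑ i, ∑ j, |B t i j|)
    (continuousOn_finsetSum _ fun i _ => continuousOn_finsetSum _ fun j _ => (hB i j).abs)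
  refine ⟨c, fun t ht v => (abs_dotProduct_mulVec_le (B t) v).trans ?_⟩
  exact mul_le_mul_of_nonneg_right ((le_abs_self _).trans (hc t ht)) (dotProduct_self_star_nonneg v)

lemma dotProduct_mulVec_pos_of_add_smul_one_mulVec_eq_zero [DecidableEq n]
    {F F' B : Matrix n n ℝ} (hF : F.IsSymm) (hineq : (F' + F * B + Bᵀ * F).PosSemidef) {c φ : ℝ}
    (hc : ∀ v, |v ⬝ᵥ B *ᵥ v| ≤ c * (v ⬝ᵥ v)) (hφ : 0 < φ) {w : n → ℝ} (hw0 : w ≠ 0)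
    (hw : (F + φ • (1 : Matrix n n ℝ)) *ᵥ w = 0) :
    0 < w ⬝ᵥ (F' + ((2 * c + 1) * φ) • (1 : Matrix n n ℝ)) *ᵥ w := by
  have hFw : F *ᵥ w = (-φ) • w := by
    rw [add_mulVec, smul_mulVec, one_mulVec] at hw
    rw [neg_smul, eq_neg_of_add_eq_zero_left hw]
  have hF' : 0 ≤ w ⬝ᵥ F' *ᵥ w + 2 * -φ * (w ⬝ᵥ B *ᵥ w) := by
    have h := hineq.dotProduct_mulVec_nonneg w
    rwa [star_trivial, add_assoc, add_mulVec, dotProduct_add,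
      dotProduct_mul_add_transpose_mul_mulVec_of_mulVec_eq_smul hF hFw] at h
  have hq : 0 < w ⬝ᵥ w := dotProduct_self_star_pos_iff.2 hw0
  have hB := (abs_le.1 (hc w)).1
  rw [add_mulVec, dotProduct_add, smul_mulVec, one_mulVec, dotProduct_smul, smul_eq_mul]
  nlinarith [mul_pos hφ hq]

end QuadraticForm

section KernelCriterion

variable {n : Type*} [Fintype n] {a b : ℝ}

/-- If `G x` were singular, then for a kernel vector `w` the function `s ↦ wᵀ G s w` would attain
its minimum `0` on `[a, x]` at the right end point, forcing a nonpositive derivative there. -/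
theorem posDef_of_forall_Ico_posSemidef {G G' : ℝ → Matrix n n ℝ} {x : ℝ}
    (hG : ∀ i j, HasDerivWithinAt (fun s => G s i j) (G' x i j) (Icc a x) x) (hax : a < x)
    (hleft : ∀ u ∈ Ico a x, (G u).PosSemidef)
    (hker : ∀ w ≠ 0, G x *ᵥ w = 0 → 0 < w ⬝ᵥ G' x *ᵥ w) : (G x).PosDef := by
  have hcont : ContinuousWithinAt G (Ico a x) x :=
    continuousWithinAt_pi.2 fun i => continuousWithinAt_pi.2 fun j =>
      ((hG i j).continuousWithinAt).mono Ico_subset_Icc_self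
  have : (𝓝[Ico a x] x).NeBot := right_nhdsWithin_Ico_neBot hax
  have hx : (G x).PosSemidef := isClosed_setOf_posSemidef.mem_of_tendsto hcont
    (eventually_nhdsWithin_of_forall hleft)
  refine PosDef.of_dotProduct_mulVec_pos hx.1 fun w hw => ?_
  by_contra! hle
  have hzero : G x *ᵥ w = 0 :=
    (hx.dotProduct_mulVec_zero_iff w).1 (le_antisymm hle (hx.dotProduct_mulVec_nonneg w))
  have hmin : IsMinOn (fun s => w ⬝ᵥ G s *ᵥ w) (Icc a x) x := fun s hs => by
    show w ⬝ᵥ G x *ᵥ w ≤ w ⬝ᵥ G s *ᵥ w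
    rcases hs.2.lt_or_eq with hsx | rfl
    · simpa [hzero] using (hleft s ⟨hs.1, hsx⟩).dotProduct_mulVec_nonneg w
    · exact le_rfl
  have := (hasDerivWithinAt_dotProduct_mulVec hG w w).nonpos_of_isMinOn_Icc hax hmin
  linarith [hker w hw hzero]

theorem posDef_of_forall_mulVec_eq_zero_dotProduct_pos {G G' : ℝ → Matrix n n ℝ}
    (hG : ∀ t ∈ Icc a b, ∀ i j, HasDerivWithinAt (fun s => G s i j) (G' t i j) (Icc a b) t)
    (hsymm : ∀ t ∈ Icc a b, (G t).IsHermitian) (ha : (G a).PosDef)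
    (hker : ∀ t ∈ Ioc a b, ∀ w ≠ 0, G t *ᵥ w = 0 → 0 < w ⬝ᵥ G' t *ᵥ w) :
    ∀ t ∈ Icc a b, (G t).PosDef := by
  have hstep : ∀ x ∈ Icc a b, (∀ u ∈ Ico a x, (G u).PosSemidef) → (G x).PosDef := by
    intro x hx hleft
    rcases hx.1.eq_or_lt with rfl | hax
    · exact ha
    · exact posDef_of_forall_Ico_posSemidef
        (fun i j => (hG x hx i j).mono (Icc_subset_Icc_right hx.2)) hax hleft
        (hker x ⟨hax, hx.2⟩)
  have hind : Icc a b ⊆ {t | ∀ u ∈ Ico a t, (G u).PosSemidef} := by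
    refine IsClosed.Icc_subset_of_forall_mem_nhdsWithin
      ((isClosed_setOf_forall_Ico a _).inter isClosed_Icc) (fun u hu => absurd hu.2 hu.1.not_gt)
      fun x ⟨hleft, hx⟩ => ?_
    have hcont : ContinuousWithinAt G (Icc a b) x :=
      continuousWithinAt_pi.2 fun i => continuousWithinAt_pi.2 fun j =>
        (hG x (Ico_subset_Icc_self hx) i j).continuousWithinAt
    have hev : ∀ᶠ t in 𝓝[≥] x, (G t).PosDef :=
      nhdsWithin_le_of_mem (Icc_mem_nhdsGE_of_mem hx)
        (hcont.eventually_posDef hsymm (hstep x (Ico_subset_Icc_self hx) hleft))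
    obtain ⟨c, hxc, hc⟩ := mem_nhdsGE_iff_exists_Ico_subset.1 hev
    filter_upwards [Ioo_mem_nhdsGT hxc] with y hy u hu
    rcases lt_or_ge u x with hux | hxu
    · exact hleft u ⟨hu.1, hux⟩
    · exact (hc ⟨hxu, hu.2.trans hy.2⟩).posSemidef
  exact fun t ht => hstep t ht (hind ht)

theorem posDef_add_exp_smul_one [DecidableEq n] {F F' B : ℝ → Matrix n n ℝ} {c ε : ℝ}
    (hderiv : ∀ t ∈ Icc a b, ∀ i j, HasDerivWithinAt (fun s => F s i j) (F' t i j) (Icc a b) t)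
    (hsymm : ∀ t ∈ Icc a b, (F t).IsSymm) (hinit : (F a).PosSemidef)
    (hineq : ∀ t ∈ Icc a b, (F' t + F t * B t + (B t)ᵀ * F t).PosSemidef)
    (hc : ∀ t ∈ Icc a b, ∀ v, |v ⬝ᵥ B t *ᵥ v| ≤ c * (v ⬝ᵥ v)) (hε : 0 < ε) :
    ∀ t ∈ Icc a b, (F t + (ε * Real.exp ((2 * c + 1) * (t - a))) • (1 : Matrix n n ℝ)).PosDef := by
  set φ : ℝ → ℝ := fun t => ε * Real.exp ((2 * c + 1) * (t - a)) with hφ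
  have hφ_deriv : ∀ t, HasDerivAt φ ((2 * c + 1) * φ t) t := fun t => by
    simpa [hφ, mul_comm, mul_left_comm] using
      ((((hasDerivAt_id t).sub_const a).const_mul (2 * c + 1)).exp).const_mul ε
  have hone : ∀ t, (φ t • (1 : Matrix n n ℝ)).PosDef := fun t => PosDef.one.smul (by positivity)
  refine posDef_of_forall_mulVec_eq_zero_dotProduct_pos
    (G' := fun t => F' t + ((2 * c + 1) * φ t) • 1) (fun t ht i j => ?_)
    (fun t ht => (isHermitian_iff_isSymm.2 (hsymm t ht)).add (hone t).isHermitian)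
    (PosDef.posSemidef_add hinit (hone a)) (fun t ht w hw0 hw => ?_)
  · simpa using (hderiv t ht i j).fun_add
      ((hφ_deriv t).hasDerivWithinAt.mul_const ((1 : Matrix n n ℝ) i j))
  · have ht' := Ioc_subset_Icc_self ht
    exact dotProduct_mulVec_pos_of_add_smul_one_mulVec_eq_zero (hsymm t ht') (hineq t ht')
      (hc t ht') (by positivity) hw0 hw

end KernelCriterion

theorem matrix_linear_comparison_general (k : ℕ)
    (F F' B : ℝ → Matrix (Fin k) (Fin k) ℝ)
    (hderiv : ∀ t ∈ Icc (0:ℝ) 1, ∀ i j,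
      HasDerivWithinAt (fun s => F s i j) (F' t i j) (Icc 0 1) t)
    (hBcont : ∀ i j, ContinuousOn (fun t => B t i j) (Icc 0 1))
    (hsymm : ∀ t ∈ Icc (0:ℝ) 1, (F t).IsSymm)
    (t₀ : ℝ) (ht₀ : t₀ ∈ Icc (0:ℝ) 1)
    (hinit : (F t₀).PosSemidef)
    (hineq : ∀ t ∈ Icc (0:ℝ) 1, (F' t + F t * B t + (B t)ᵀ * F t).PosSemidef) :
    ∀ t ∈ Icc t₀ 1, (F t).PosSemidef := by
  obtain ⟨c, hc⟩ := exists_abs_dotProduct_mulVec_le_of_continuousOn isCompact_Icc hBcont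
  have hsub : Icc t₀ 1 ⊆ Icc 0 1 := Icc_subset_Icc_left ht₀.1
  intro t ht
  refine posSemidef_of_forall_posDef_add_smul_one fun δ hδ => ?_
  have hpert := posDef_add_exp_smul_one
    (fun s hs i j => (hderiv s (hsub hs) i j).mono hsub) (fun s hs => hsymm s (hsub hs)) hinit
    (fun s hs => hineq s (hsub hs)) (fun s hs => hc s (hsub hs))
    (ε := δ / Real.exp ((2 * c + 1) * (t - t₀))) (by positivity) t ht
  rwa [div_mul_cancel₀ _ (Real.exp_pos _).ne'] at hpert

theorem matrix_linear_comparison (k : ℕ)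
    (F F' B : ℝ → Matrix (Fin k) (Fin k) ℝ)
    (hderiv : ∀ t ∈ Icc (0:ℝ) 1, ∀ i j,
      HasDerivWithinAt (fun s => F s i j) (F' t i j) (Icc 0 1) t)
    (hF'cont : ∀ i j, ContinuousOn (fun t => F' t i j) (Icc 0 1))
    (hBcont : ∀ i j, ContinuousOn (fun t => B t i j) (Icc 0 1))
    (hsymm : ∀ t ∈ Icc (0:ℝ) 1, (F t).IsSymm)
    (t₀ : ℝ) (ht₀ : t₀ ∈ Icc (0:ℝ) 1)
    (hinit : (F t₀).PosSemidef)
    (hineq : ∀ t ∈ Icc (0:ℝ) 1, (F' t + F t * B t + (B t)ᵀ * F t).PosSemidef) :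
    ∀ t ∈ Icc t₀ 1, (F t).PosSemidef :=
  matrix_linear_comparison_general k F F' B hderiv hBcont hsymm t₀ ht₀ hinit hineq
end

section
/- The functions g₁(t) = 1/(12 + t²α)², g₂(t) = 1/(t(12 + t²α)²), g₃(t) = 1/(t²(12 + t²α)²), with α > 0 constant, form a fundamental system of solutions on (0,∞) of the third order linear ODE g''' + (18(t²α + 4)/(t(12 + t²α))) g'' + (18(5t⁴α² + 48t²α + 48)/(t²(12 + t²α)²)) g' + (24α(5t²α + 24)/(t(12 + t²α)²)) g = 0. -/
/-!
Multiplying the equation by `P(t) = weight α t = t²(12 + t²α)²` turns its left side into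
`(P g)''' / P`: the coefficients are `3P'/P`, `3P''/P` and `P'''/P`. So on `(0,∞)`, where `P > 0`,
the solutions are exactly the quotients `q / P` with `q` a polynomial of degree at most two, and
`g₁, g₂, g₃` are the quotients for `q = t², t, 1`.
-/

open Set

/-- The third order ODE predicate: `g` (with given first, second and third
derivative functions) solves the second symmetric power equation on `(0,∞)`. -/
def SolvesThirdOrderODE (α : ℝ) (g g' g'' g''' : ℝ → ℝ) : Prop :=
  (∀ t ∈ Set.Ioi (0:ℝ), HasDerivAt g (g' t) t) ∧
  (∀ t ∈ Set.Ioi (0:ℝ), HasDerivAt g' (g'' t) t) ∧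
  (∀ t ∈ Set.Ioi (0:ℝ), HasDerivAt g'' (g''' t) t) ∧
  (∀ t ∈ Set.Ioi (0:ℝ),
    g''' t + (18 * (t ^ 2 * α + 4) / (t * (12 + t ^ 2 * α))) * g'' t
      + (18 * (5 * t ^ 4 * α ^ 2 + 48 * t ^ 2 * α + 48) /
          (t ^ 2 * (12 + t ^ 2 * α) ^ 2)) * g' t
      + (24 * α * (5 * t ^ 2 * α + 24) / (t * (12 + t ^ 2 * α) ^ 2)) * g t = 0)

theorem IsOpen.exists_eqOn_add_of_hasDerivAt {s : Set ℝ} {f g f' : ℝ → ℝ} (hs : IsOpen s)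
    (hs' : IsPreconnected s) (hf : ∀ t ∈ s, HasDerivAt f (f' t) t)
    (hg : ∀ t ∈ s, HasDerivAt g (f' t) t) : ∃ c, ∀ t ∈ s, f t = g t + c :=
  hs.exists_eq_add_of_deriv_eq hs'
    (fun t ht => (hf t ht).differentiableAt.differentiableWithinAt)
    (fun t ht => (hg t ht).differentiableAt.differentiableWithinAt)
    (fun t ht => (hf t ht).deriv.trans (hg t ht).deriv.symm)

theorem IsOpen.eqOn_of_hasDerivAt_of_eqOn {s : Set ℝ} {f g f' g' : ℝ → ℝ} (hs : IsOpen s)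
    (hfg : EqOn f g s) (hf : ∀ t ∈ s, HasDerivAt f (f' t) t)
    (hg : ∀ t ∈ s, HasDerivAt g (g' t) t) : EqOn f' g' s := fun t ht =>
  (hf t ht).unique ((hg t ht).congr_of_eventuallyEq (hfg.eventuallyEq_of_mem (hs.mem_nhds ht)))

def HasDerivChainOn (s : Set ℝ) (g g' g'' g''' : ℝ → ℝ) : Prop :=
  (∀ t ∈ s, HasDerivAt g (g' t) t) ∧ (∀ t ∈ s, HasDerivAt g' (g'' t) t) ∧
    ∀ t ∈ s, HasDerivAt g'' (g''' t) t

namespace HasDerivChainOn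

variable {s : Set ℝ} {f f' f'' f''' g g' g'' g''' : ℝ → ℝ}

theorem mul (hf : HasDerivChainOn s f f' f'' f''') (hg : HasDerivChainOn s g g' g'' g''') :
    HasDerivChainOn s (fun t => f t * g t) (fun t => f' t * g t + f t * g' t)
      (fun t => f'' t * g t + 2 * (f' t * g' t) + f t * g'' t)
      (fun t => f''' t * g t + 3 * (f'' t * g' t) + 3 * (f' t * g'' t) + f t * g''' t) := by
  obtain ⟨hf₁, hf₂, hf₃⟩ := hf
  obtain ⟨hg₁, hg₂, hg₃⟩ := hg
  refine ⟨fun t ht => (hf₁ t ht).mul (hg₁ t ht), fun t ht => ?_, fun t ht => ?_⟩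
  · exact (((hf₂ t ht).mul (hg₁ t ht)).add ((hf₁ t ht).mul (hg₂ t ht))).congr_deriv (by ring)
  · exact ((((hf₃ t ht).mul (hg₁ t ht)).add (((hf₂ t ht).mul (hg₂ t ht)).const_mul 2)).add
      ((hf₁ t ht).mul (hg₃ t ht))).congr_deriv (by ring)

theorem eqOn_third (hs : IsOpen s) (hfg : EqOn f g s) (hf : HasDerivChainOn s f f' f'' f''')
    (hg : HasDerivChainOn s g g' g'' g''') : EqOn f''' g''' s :=
  have h₁ := hs.eqOn_of_hasDerivAt_of_eqOn hfg hf.1 hg.1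
  have h₂ := hs.eqOn_of_hasDerivAt_of_eqOn h₁ hf.2.1 hg.2.1
  hs.eqOn_of_hasDerivAt_of_eqOn h₂ hf.2.2 hg.2.2

theorem exists_quadratic (hs : IsOpen s) (hs' : IsPreconnected s)
    (hg : HasDerivChainOn s g g' g'' g''') (h₀ : ∀ t ∈ s, g''' t = 0) :
    ∃ a b c : ℝ, ∀ t ∈ s, g t = a * t ^ 2 + b * t + c := by
  obtain ⟨hg₁, hg₂, hg₃⟩ := hg
  obtain ⟨a, ha⟩ := hs.exists_eqOn_add_of_hasDerivAt hs' hg₃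
    fun t ht => (hasDerivAt_const t (0 : ℝ)).congr_deriv (h₀ t ht).symm
  obtain ⟨b, hb⟩ := hs.exists_eqOn_add_of_hasDerivAt hs' hg₂
    fun t ht => ((hasDerivAt_id t).const_mul a).congr_deriv (by simp [ha t ht])
  obtain ⟨c, hc⟩ := hs.exists_eqOn_add_of_hasDerivAt hs' hg₁
    fun t ht => (((hasDerivAt_pow 2 t).const_mul (a / 2)).add
      ((hasDerivAt_id t).const_mul b)).congr_deriv (by simp [hb t ht]; ring)
  exact ⟨a / 2, b, c, hc⟩

end HasDerivChainOn

theorem ContDiffOn.hasDerivChainOn {s : Set ℝ} {g : ℝ → ℝ} (hs : IsOpen s)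
    (hg : ContDiffOn ℝ 3 g s) :
    HasDerivChainOn s g (deriv g) (deriv (deriv g)) (deriv (deriv (deriv g))) := by
  have hasDerivAt {f : ℝ → ℝ} (hf : ContDiffOn ℝ 1 f s) : ∀ t ∈ s, HasDerivAt f (deriv f t) t :=
    fun t ht => ((hf.differentiableOn one_ne_zero).differentiableAt (hs.mem_nhds ht)).hasDerivAt
  have h₁ : ContDiffOn ℝ 2 (deriv g) s := hg.deriv_of_isOpen hs (by norm_num)
  have h₂ : ContDiffOn ℝ 1 (deriv (deriv g)) s := h₁.deriv_of_isOpen hs (by norm_num)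
  exact ⟨hasDerivAt (hg.of_le (by norm_num)), hasDerivAt (h₁.of_le (by norm_num)), hasDerivAt h₂⟩

theorem hasDerivChainOn_quadratic (s : Set ℝ) (a b c : ℝ) :
    HasDerivChainOn s (fun t => a * t ^ 2 + b * t + c) (fun t => 2 * a * t + b)
      (fun _ => 2 * a) (fun _ => 0) := by
  refine ⟨fun t _ => ?_, fun t _ => ?_, fun t _ => hasDerivAt_const t _⟩
  · exact ((((hasDerivAt_pow 2 t).const_mul a).add ((hasDerivAt_id t).const_mul b)).add_const
      c).congr_deriv (by simp; ring)
  · exact (((hasDerivAt_id t).const_mul (2 * a)).add_const b).congr_deriv (by simp)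

def weight (α t : ℝ) : ℝ := t ^ 2 * (12 + t ^ 2 * α) ^ 2

theorem weight_pos {α t : ℝ} (hα : 0 ≤ α) (ht : 0 < t) : 0 < weight α t := by
  unfold weight; positivity

theorem contDiff_weight (α : ℝ) {n : WithTop ℕ∞} : ContDiff ℝ n (weight α) := by
  unfold weight; fun_prop

theorem hasDerivChainOn_weight (α : ℝ) (s : Set ℝ) :
    HasDerivChainOn s (weight α) (fun t => 6 * α ^ 2 * t ^ 5 + 96 * α * t ^ 3 + 288 * t)
      (fun t => 30 * α ^ 2 * t ^ 4 + 288 * α * t ^ 2 + 288)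
      (fun t => 120 * α ^ 2 * t ^ 3 + 576 * α * t) := by
  have hw : weight α = fun t => α ^ 2 * t ^ 6 + 24 * α * t ^ 4 + 144 * t ^ 2 := by
    funext t; unfold weight; ring
  rw [hw]
  refine ⟨fun t _ => ?_, fun t _ => ?_, fun t _ => ?_⟩
  · exact ((((hasDerivAt_pow 6 t).const_mul (α ^ 2)).add
      ((hasDerivAt_pow 4 t).const_mul (24 * α))).add
      ((hasDerivAt_pow 2 t).const_mul 144)).congr_deriv (by push_cast; ring)
  · exact ((((hasDerivAt_pow 5 t).const_mul (6 * α ^ 2)).add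
      ((hasDerivAt_pow 3 t).const_mul (96 * α))).add
      ((hasDerivAt_id t).const_mul 288)).congr_deriv (by push_cast; ring)
  · exact ((((hasDerivAt_pow 4 t).const_mul (30 * α ^ 2)).add
      ((hasDerivAt_pow 2 t).const_mul (288 * α))).add_const 288).congr_deriv (by push_cast; ring)

theorem thirdOrderODE_lhs_eq_div_weight {α t x₀ x₁ x₂ x₃ : ℝ} (ht : t ≠ 0)
    (hw : 12 + t ^ 2 * α ≠ 0) :
    x₃ + (18 * (t ^ 2 * α + 4) / (t * (12 + t ^ 2 * α))) * x₂
      + (18 * (5 * t ^ 4 * α ^ 2 + 48 * t ^ 2 * α + 48) / (t ^ 2 * (12 + t ^ 2 * α) ^ 2)) * x₁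
      + (24 * α * (5 * t ^ 2 * α + 24) / (t * (12 + t ^ 2 * α) ^ 2)) * x₀ =
    ((120 * α ^ 2 * t ^ 3 + 576 * α * t) * x₀
      + 3 * ((30 * α ^ 2 * t ^ 4 + 288 * α * t ^ 2 + 288) * x₁)
      + 3 * ((6 * α ^ 2 * t ^ 5 + 96 * α * t ^ 3 + 288 * t) * x₂) + weight α t * x₃)
      / weight α t := by
  unfold weight
  field_simp
  ring

theorem solvesThirdOrderODE_iff {α : ℝ} (hα : 0 ≤ α) {g g' g'' g''' : ℝ → ℝ}
    (hg : HasDerivChainOn (Ioi 0) g g' g'' g''') :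
    SolvesThirdOrderODE α g g' g'' g''' ↔
      ∃ a b c : ℝ, ∀ t ∈ Ioi (0 : ℝ), weight α t * g t = a * t ^ 2 + b * t + c := by
  have hu := (hasDerivChainOn_weight α _).mul hg
  constructor
  · rintro ⟨-, -, -, h⟩
    refine hu.exists_quadratic isOpen_Ioi isPreconnected_Ioi fun t (ht : 0 < t) => ?_
    have h' := h t ht
    rwa [thirdOrderODE_lhs_eq_div_weight ht.ne' (by positivity), div_eq_zero_iff,
      or_iff_left (weight_pos hα ht).ne'] at h'
  · rintro ⟨a, b, c, h⟩
    refine ⟨hg.1, hg.2.1, hg.2.2, fun t (ht : 0 < t) => ?_⟩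
    have h₃ := hu.eqOn_third isOpen_Ioi h (hasDerivChainOn_quadratic _ a b c) ht
    rw [thirdOrderODE_lhs_eq_div_weight ht.ne' (by positivity), div_eq_zero_iff]
    exact Or.inl h₃

theorem exists_solvesThirdOrderODE_of_weight_mul_eq {α a b c : ℝ} (hα : 0 ≤ α) {g : ℝ → ℝ}
    (h : ∀ t ∈ Ioi (0 : ℝ), weight α t * g t = a * t ^ 2 + b * t + c) :
    ∃ g' g'' g''', SolvesThirdOrderODE α g g' g'' g''' := by
  have hq : ContDiffOn ℝ 3 (fun t => (a * t ^ 2 + b * t + c) / weight α t) (Ioi 0) :=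
    (by fun_prop : ContDiff ℝ 3 fun t : ℝ => a * t ^ 2 + b * t + c).contDiffOn.div
      (contDiff_weight α).contDiffOn fun t ht => (weight_pos hα ht).ne'
  have hg : ContDiffOn ℝ 3 g (Ioi 0) := hq.congr fun t ht => by
    rw [← h t ht, mul_div_cancel_left₀ _ (weight_pos hα ht).ne']
  exact ⟨_, _, _, (solvesThirdOrderODE_iff hα (hg.hasDerivChainOn isOpen_Ioi)).2 ⟨a, b, c, h⟩⟩

theorem lincomb_eq_div_weight {α t : ℝ} (hα : 0 ≤ α) (ht : 0 < t) (c₁ c₂ c₃ : ℝ) :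
    c₁ * (1 / (12 + t ^ 2 * α) ^ 2) + c₂ * (1 / (t * (12 + t ^ 2 * α) ^ 2))
      + c₃ * (1 / (t ^ 2 * (12 + t ^ 2 * α) ^ 2)) = (c₁ * t ^ 2 + c₂ * t + c₃) / weight α t := by
  unfold weight
  field_simp

theorem eq_zero_of_quadratic_eq_zero_on_Ioi {a b c : ℝ}
    (h : ∀ t ∈ Ioi (0 : ℝ), a * t ^ 2 + b * t + c = 0) : a = 0 ∧ b = 0 ∧ c = 0 := by
  have h₁ := h 1 (by norm_num)
  have h₂ := h 2 (by norm_num)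
  have h₃ := h 3 (by norm_num)
  norm_num at h₁ h₂ h₃
  exact ⟨by linarith, by linarith, by linarith⟩

theorem fundamental_system_third_order (α : ℝ) (hα : 0 < α) :
    -- each of g₁, g₂, g₃ solves the ODE
    (∃ g₁' g₁'' g₁''', SolvesThirdOrderODE α
      (fun t => 1 / (12 + t ^ 2 * α) ^ 2) g₁' g₁'' g₁''') ∧
    (∃ g₂' g₂'' g₂''', SolvesThirdOrderODE α
      (fun t => 1 / (t * (12 + t ^ 2 * α) ^ 2)) g₂' g₂'' g₂''') ∧
    (∃ g₃' g₃'' g₃''', SolvesThirdOrderODE α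
      (fun t => 1 / (t ^ 2 * (12 + t ^ 2 * α) ^ 2)) g₃' g₃'' g₃''') ∧
    -- they are linearly independent on (0,∞)
    (∀ c₁ c₂ c₃ : ℝ,
      (∀ t ∈ Set.Ioi (0:ℝ),
        c₁ * (1 / (12 + t ^ 2 * α) ^ 2) + c₂ * (1 / (t * (12 + t ^ 2 * α) ^ 2))
          + c₃ * (1 / (t ^ 2 * (12 + t ^ 2 * α) ^ 2)) = 0) →
      c₁ = 0 ∧ c₂ = 0 ∧ c₃ = 0) ∧
    -- they span the solution space
    (∀ g g' g'' g''' : ℝ → ℝ, SolvesThirdOrderODE α g g' g'' g''' →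
      ∃ c₁ c₂ c₃ : ℝ, ∀ t ∈ Set.Ioi (0:ℝ),
        g t = c₁ * (1 / (12 + t ^ 2 * α) ^ 2) + c₂ * (1 / (t * (12 + t ^ 2 * α) ^ 2))
          + c₃ * (1 / (t ^ 2 * (12 + t ^ 2 * α) ^ 2))) := by
  have hw : ∀ t ∈ Ioi (0 : ℝ), weight α t ≠ 0 := fun t ht => (weight_pos hα.le ht).ne'
  refine ⟨?_, ?_, ?_, ?_, ?_⟩
  · refine exists_solvesThirdOrderODE_of_weight_mul_eq (a := 1) (b := 0) (c := 0) hα.le ?_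
    intro t (ht : 0 < t); unfold weight; field_simp; ring
  · refine exists_solvesThirdOrderODE_of_weight_mul_eq (a := 0) (b := 1) (c := 0) hα.le ?_
    intro t (ht : 0 < t); unfold weight; field_simp; ring
  · refine exists_solvesThirdOrderODE_of_weight_mul_eq (a := 0) (b := 0) (c := 1) hα.le ?_
    intro t (ht : 0 < t); unfold weight; field_simp; ring
  · intro c₁ c₂ c₃ h
    refine eq_zero_of_quadratic_eq_zero_on_Ioi fun t ht => ?_
    have h' := h t ht
    rwa [lincomb_eq_div_weight hα.le ht, div_eq_zero_iff, or_iff_left (hw t ht)] at h'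
  · intro g g' g'' g''' hg
    obtain ⟨a, b, c, h⟩ := (solvesThirdOrderODE_iff hα.le ⟨hg.1, hg.2.1, hg.2.2.1⟩).1 hg
    refine ⟨a, b, c, fun t ht => ?_⟩
    rw [lincomb_eq_div_weight hα.le ht, ← h t ht, mul_div_cancel_left₀ _ (hw t ht)]
end

section
/- If f₁ and f₂ are two solutions of a second order linear ODE f'' + p(t) f' + q(t) f = 0 with p, q continuously differentiable on an interval I, then f₁², f₁f₂, and f₂² all solve the third order ODE g''' + 3p g'' + (2p² + p' + 4q) g' + (4pq + 2q') g = 0. -/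
open Set

private lemma ssp_aux (I : Set ℝ) (hI : IsOpen I)
    (p q p' q' f₁ f₂ : ℝ → ℝ)
    (hp : ∀ t ∈ I, HasDerivAt p (p' t) t)
    (hq : ∀ t ∈ I, HasDerivAt q (q' t) t)
    (hd₁ : ∀ t ∈ I, HasDerivAt f₁ (deriv f₁ t) t)
    (hd₁' : ∀ t ∈ I, HasDerivAt (deriv f₁) (deriv (deriv f₁) t) t)
    (hd₂ : ∀ t ∈ I, HasDerivAt f₂ (deriv f₂ t) t)
    (hd₂' : ∀ t ∈ I, HasDerivAt (deriv f₂) (deriv (deriv f₂) t) t)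
    (hode₁ : ∀ t ∈ I, deriv (deriv f₁) t + p t * deriv f₁ t + q t * f₁ t = 0)
    (hode₂ : ∀ t ∈ I, deriv (deriv f₂) t + p t * deriv f₂ t + q t * f₂ t = 0) :
    ∀ t ∈ I,
        deriv (deriv (deriv (fun t => f₁ t * f₂ t))) t
          + 3 * p t * deriv (deriv (fun t => f₁ t * f₂ t)) t
          + (2 * p t ^ 2 + p' t + 4 * q t) * deriv (fun t => f₁ t * f₂ t) t
          + (4 * p t * q t + 2 * q' t) * (fun t => f₁ t * f₂ t) t = 0 := by
  -- third derivative of f₁ (via the ODE)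
  have h3₁ : ∀ t ∈ I, HasDerivAt (deriv (deriv f₁))
      (-((p' t * deriv f₁ t + p t * deriv (deriv f₁) t)
        + (q' t * f₁ t + q t * deriv f₁ t))) t := by
    intro t ht
    have h : HasDerivAt (fun s => -(p s * deriv f₁ s + q s * f₁ s))
        (-((p' t * deriv f₁ t + p t * deriv (deriv f₁) t)
          + (q' t * f₁ t + q t * deriv f₁ t))) t :=
      (((hp t ht).mul (hd₁' t ht)).add ((hq t ht).mul (hd₁ t ht))).neg
    refine h.congr_of_eventuallyEq ?_
    filter_upwards [hI.mem_nhds ht] with s hs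
    have := hode₁ s hs; linarith
  have h3₂ : ∀ t ∈ I, HasDerivAt (deriv (deriv f₂))
      (-((p' t * deriv f₂ t + p t * deriv (deriv f₂) t)
        + (q' t * f₂ t + q t * deriv f₂ t))) t := by
    intro t ht
    have h : HasDerivAt (fun s => -(p s * deriv f₂ s + q s * f₂ s))
        (-((p' t * deriv f₂ t + p t * deriv (deriv f₂) t)
          + (q' t * f₂ t + q t * deriv f₂ t))) t :=
      (((hp t ht).mul (hd₂' t ht)).add ((hq t ht).mul (hd₂ t ht))).neg
    refine h.congr_of_eventuallyEq ?_
    filter_upwards [hI.mem_nhds ht] with s hs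
    have := hode₂ s hs; linarith
  -- first derivative of g
  have hg1 : ∀ t ∈ I, HasDerivAt (fun u => f₁ u * f₂ u)
      (deriv f₁ t * f₂ t + f₁ t * deriv f₂ t) t := fun t ht =>
    (hd₁ t ht).mul (hd₂ t ht)
  -- second derivative of g
  have hg2 : ∀ t ∈ I, HasDerivAt (deriv (fun u => f₁ u * f₂ u))
      ((deriv (deriv f₁) t * f₂ t + deriv f₁ t * deriv f₂ t)
        + (deriv f₁ t * deriv f₂ t + f₁ t * deriv (deriv f₂) t)) t := by
    intro t ht
    have h : HasDerivAt (fun s => deriv f₁ s * f₂ s + f₁ s * deriv f₂ s)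
        ((deriv (deriv f₁) t * f₂ t + deriv f₁ t * deriv f₂ t)
          + (deriv f₁ t * deriv f₂ t + f₁ t * deriv (deriv f₂) t)) t :=
      ((hd₁' t ht).mul (hd₂ t ht)).add ((hd₁ t ht).mul (hd₂' t ht))
    refine h.congr_of_eventuallyEq ?_
    filter_upwards [hI.mem_nhds ht] with s hs
    exact (hg1 s hs).deriv
  -- third derivative of g
  have hg3 : ∀ t ∈ I, HasDerivAt (deriv (deriv (fun u => f₁ u * f₂ u)))
      (((-((p' t * deriv f₁ t + p t * deriv (deriv f₁) t)
          + (q' t * f₁ t + q t * deriv f₁ t)) * f₂ t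
            + deriv (deriv f₁) t * deriv f₂ t)
        + (deriv (deriv f₁) t * deriv f₂ t + deriv f₁ t * deriv (deriv f₂) t))
       + ((deriv (deriv f₁) t * deriv f₂ t + deriv f₁ t * deriv (deriv f₂) t)
        + (deriv f₁ t * deriv (deriv f₂) t
          + f₁ t * -((p' t * deriv f₂ t + p t * deriv (deriv f₂) t)
            + (q' t * f₂ t + q t * deriv f₂ t))))) t := by
    intro t ht
    have h : HasDerivAt (fun s =>
        (deriv (deriv f₁) s * f₂ s + deriv f₁ s * deriv f₂ s)
          + (deriv f₁ s * deriv f₂ s + f₁ s * deriv (deriv f₂) s)) _ t :=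
      (((h3₁ t ht).mul (hd₂ t ht)).add ((hd₁' t ht).mul (hd₂' t ht))).add
        (((hd₁' t ht).mul (hd₂' t ht)).add ((hd₁ t ht).mul (h3₂ t ht)))
    refine h.congr_of_eventuallyEq ?_
    filter_upwards [hI.mem_nhds ht] with s hs
    exact (hg2 s hs).deriv
  intro t ht
  rw [(hg3 t ht).deriv, (hg2 t ht).deriv, (hg1 t ht).deriv]
  have hc := hode₁ t ht
  have hf := hode₂ t ht
  simp only []
  linear_combination (2 * p t * f₂ t + 3 * deriv f₂ t) * hc
    + (3 * deriv f₁ t + 2 * p t * f₁ t) * hf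

theorem second_symmetric_power (I : Set ℝ) (hI : IsOpen I)
    (p q p' q' f₁ f₂ : ℝ → ℝ)
    (hp : ∀ t ∈ I, HasDerivAt p (p' t) t)
    (hq : ∀ t ∈ I, HasDerivAt q (q' t) t)
    (hp' : ContinuousOn p' I) (hq' : ContinuousOn q' I)
    (hf₁ : ContDiffOn ℝ 3 f₁ I) (hf₂ : ContDiffOn ℝ 3 f₂ I)
    (hode₁ : ∀ t ∈ I, deriv (deriv f₁) t + p t * deriv f₁ t + q t * f₁ t = 0)
    (hode₂ : ∀ t ∈ I, deriv (deriv f₂) t + p t * deriv f₂ t + q t * f₂ t = 0) :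
    ∀ g ∈ ({fun t => f₁ t * f₁ t, fun t => f₁ t * f₂ t, fun t => f₂ t * f₂ t} :
        Set (ℝ → ℝ)),
      ∀ t ∈ I,
        deriv (deriv (deriv g)) t + 3 * p t * deriv (deriv g) t
          + (2 * p t ^ 2 + p' t + 4 * q t) * deriv g t
          + (4 * p t * q t + 2 * q' t) * g t = 0 := by
  have hd₁ : ∀ t ∈ I, HasDerivAt f₁ (deriv f₁ t) t := fun t ht =>
    ((hf₁.differentiableOn (by norm_num) t ht).differentiableAt
      (hI.mem_nhds ht)).hasDerivAt
  have hd₂ : ∀ t ∈ I, HasDerivAt f₂ (deriv f₂ t) t := fun t ht =>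
    ((hf₂.differentiableOn (by norm_num) t ht).differentiableAt
      (hI.mem_nhds ht)).hasDerivAt
  have hD₁ : ContDiffOn ℝ 2 (deriv f₁) I := hf₁.deriv_of_isOpen hI (by norm_num)
  have hD₂ : ContDiffOn ℝ 2 (deriv f₂) I := hf₂.deriv_of_isOpen hI (by norm_num)
  have hd₁' : ∀ t ∈ I, HasDerivAt (deriv f₁) (deriv (deriv f₁) t) t := fun t ht =>
    ((hD₁.differentiableOn (by norm_num) t ht).differentiableAt
      (hI.mem_nhds ht)).hasDerivAt
  have hd₂' : ∀ t ∈ I, HasDerivAt (deriv f₂) (deriv (deriv f₂) t) t := fun t ht =>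
    ((hD₂.differentiableOn (by norm_num) t ht).differentiableAt
      (hI.mem_nhds ht)).hasDerivAt
  rintro g (rfl | rfl | rfl)
  · exact ssp_aux I hI p q p' q' f₁ f₁ hp hq hd₁ hd₁' hd₁ hd₁' hode₁ hode₁
  · exact ssp_aux I hI p q p' q' f₁ f₂ hp hq hd₁ hd₁' hd₂ hd₂' hode₁ hode₂
  · exact ssp_aux I hI p q p' q' f₂ f₂ hp hq hd₂ hd₂' hd₂ hd₂' hode₂ hode₂
end

section
/- Let r, a > 0 and set r_s = r a (1 - s). If f satisfies the second order ODE f''(t) + (r a r_{1-t} (1 - cos r_{1-t}) / (2 - 2 cos r_{1-t} - r_{1-t} sin r_{1-t})) f'(t) + (r² a² (1 - cos r_{1-t}) / (2 - 2 cos r_{1-t} - r_{1-t} sin r_{1-t})) f(t) = 0 on an interval where the denominator is nonzero, then h(t) := (r_{1-t} cos(r_{1-t}/2) - 2 sin(r_{1-t}/2)) f(t) satisfies h''(t) + (r²a²/4) h(t) = 0. -/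
open Set Real

/-! With `x = r a t`, the weight `w(x) = x cos (x/2) - 2 sin (x/2)` satisfies `w'(x) = -(x/2) sin (x/2)`
and `w'' + w/4 = -sin (x/2)`, while the half-angle formulas factor the denominator of the ODE as
`2 - 2 cos x - x sin x = -2 sin (x/2) w(x)`. Multiplying the ODE by this denominator and dividing by
`-2 sin (x/2) ≠ 0` turns it into `w f'' + 2 (r a) w' f' - (r a)² sin (x/2) f = 0`, which by the
Leibniz rule is exactly `h'' + (r a)²/4 h = 0` for `h(t) = w(r a t) f(t)`. -/

theorem deriv_deriv_mul_eq {𝕜 : Type*} [NontriviallyNormedField 𝕜] {I : Set 𝕜} (hI : IsOpen I)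
    {u u' u'' v v' v'' : 𝕜 → 𝕜}
    (hu : ∀ t ∈ I, HasDerivAt u (u' t) t) (hu' : ∀ t ∈ I, HasDerivAt u' (u'' t) t)
    (hv : ∀ t ∈ I, HasDerivAt v (v' t) t) (hv' : ∀ t ∈ I, HasDerivAt v' (v'' t) t)
    {t : 𝕜} (ht : t ∈ I) :
    deriv (deriv fun s => u s * v s) t = u'' t * v t + 2 * (u' t * v' t) + u t * v'' t := by
  have hderiv : deriv (fun s => u s * v s) =ᶠ[nhds t] fun s => u' s * v s + u s * v' s := by
    filter_upwards [hI.mem_nhds ht] with s hs using ((hu s hs).mul (hv s hs)).deriv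
  rw [hderiv.deriv_eq]
  exact (((hu' t ht).mul (hv t ht)).add ((hu t ht).mul (hv' t ht))).deriv.trans (by ring)

namespace TrigODE

noncomputable def weight (x : ℝ) : ℝ := x * cos (x / 2) - 2 * sin (x / 2)

noncomputable def weightDeriv (x : ℝ) : ℝ := -(x / 2) * sin (x / 2)

theorem hasDerivAt_half (x : ℝ) : HasDerivAt (fun x : ℝ => x / 2) (1 / 2) x :=
  (hasDerivAt_id x).div_const 2

theorem hasDerivAt_weight (x : ℝ) : HasDerivAt weight (weightDeriv x) x := by
  have := ((hasDerivAt_id x).mul (hasDerivAt_half x).cos).sub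
    ((hasDerivAt_half x).sin.const_mul 2)
  exact this.congr_deriv (by simp only [weightDeriv, id]; ring)

theorem hasDerivAt_weightDeriv (x : ℝ) :
    HasDerivAt weightDeriv (-(weight x / 4) - sin (x / 2)) x := by
  have := ((hasDerivAt_half x).neg.mul (hasDerivAt_half x).sin)
  exact this.congr_deriv (by simp only [weight, Pi.neg_apply]; ring)

theorem hasDerivAt_weight_comp_mul (c s : ℝ) :
    HasDerivAt (fun s => weight (c * s)) (c * weightDeriv (c * s)) s := by
  have := (hasDerivAt_weight (c * s)).comp s ((hasDerivAt_id s).const_mul c)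
  exact this.congr_deriv (by ring)

theorem hasDerivAt_weightDeriv_comp_mul (c s : ℝ) :
    HasDerivAt (fun s => c * weightDeriv (c * s))
      (c * (c * (-(weight (c * s) / 4) - sin (c * s / 2)))) s := by
  have := ((hasDerivAt_weightDeriv (c * s)).comp s ((hasDerivAt_id s).const_mul c)).const_mul c
  exact this.congr_deriv (by ring)

theorem one_sub_cos_eq_two_mul_sin_half_sq (x : ℝ) : 1 - cos x = 2 * sin (x / 2) ^ 2 := by
  have hcos : cos x = 1 - 2 * sin (x / 2) ^ 2 := by rw [← cos_two_mul_eq_one_sub]; ring_nf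
  rw [hcos]; ring

theorem two_sub_two_mul_cos_sub_mul_sin_eq (x : ℝ) :
    2 - 2 * cos x - x * sin x = -2 * sin (x / 2) * weight x := by
  have hsin : sin x = 2 * sin (x / 2) * cos (x / 2) := by rw [← sin_two_mul]; ring_nf
  rw [show 2 - 2 * cos x = 2 * (1 - cos x) by ring, one_sub_cos_eq_two_mul_sin_half_sq, hsin,
    weight]
  ring

theorem weighted_ode_of_ode {c x y y' y'' : ℝ} (hD : 2 - 2 * cos x - x * sin x ≠ 0)
    (hode : y'' + c * x * (1 - cos x) / (2 - 2 * cos x - x * sin x) * y'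
      + c ^ 2 * (1 - cos x) / (2 - 2 * cos x - x * sin x) * y = 0) :
    weight x * y'' + 2 * (c * weightDeriv x * y') - c ^ 2 * sin (x / 2) * y = 0 := by
  have hS : -2 * sin (x / 2) ≠ 0 := by
    rw [two_sub_two_mul_cos_sub_mul_sin_eq] at hD; exact left_ne_zero_of_mul hD
  have hcleared : (2 - 2 * cos x - x * sin x) * y'' + c * x * (1 - cos x) * y'
      + c ^ 2 * (1 - cos x) * y = 0 := by
    generalize 2 - 2 * cos x - x * sin x = D at hD hode ⊢
    rw [← mul_zero D, ← hode]
    field_simp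
  rw [two_sub_two_mul_cos_sub_mul_sin_eq, one_sub_cos_eq_two_mul_sin_half_sq] at hcleared
  rw [weightDeriv]
  refine (mul_eq_zero.mp ?_).resolve_left hS
  linear_combination hcleared

end TrigODE

theorem trig_ode_transformation_general (r a : ℝ)
    (I : Set ℝ) (hI : IsOpen I)
    (f f' f'' : ℝ → ℝ)
    (hf : ∀ t ∈ I, HasDerivAt f (f' t) t)
    (hf' : ∀ t ∈ I, HasDerivAt f' (f'' t) t)
    (hdenom : ∀ t ∈ I,
      2 - 2 * Real.cos (r * a * (1 - (1 - t))) -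
        (r * a * (1 - (1 - t))) * Real.sin (r * a * (1 - (1 - t))) ≠ 0)
    (hode : ∀ t ∈ I,
      f'' t
        + (r * a * (r * a * (1 - (1 - t))) * (1 - Real.cos (r * a * (1 - (1 - t)))) /
            (2 - 2 * Real.cos (r * a * (1 - (1 - t))) -
              (r * a * (1 - (1 - t))) * Real.sin (r * a * (1 - (1 - t))))) * f' t
        + (r ^ 2 * a ^ 2 * (1 - Real.cos (r * a * (1 - (1 - t)))) /
            (2 - 2 * Real.cos (r * a * (1 - (1 - t))) -
              (r * a * (1 - (1 - t))) * Real.sin (r * a * (1 - (1 - t))))) * f t = 0) :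
    ∀ t ∈ I,
      deriv (deriv (fun s =>
        ((r * a * (1 - (1 - s))) * Real.cos ((r * a * (1 - (1 - s))) / 2)
          - 2 * Real.sin ((r * a * (1 - (1 - s))) / 2)) * f s)) t
        + (r ^ 2 * a ^ 2 / 4) *
          (((r * a * (1 - (1 - t))) * Real.cos ((r * a * (1 - (1 - t))) / 2)
            - 2 * Real.sin ((r * a * (1 - (1 - t))) / 2)) * f t) = 0 := by
  intro t ht
  simp only [sub_sub_cancel] at hdenom hode ⊢
  have hweighted := TrigODE.weighted_ode_of_ode (c := r * a) (hdenom t ht)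
    (by rw [mul_pow]; exact hode t ht)
  have hleibniz := deriv_deriv_mul_eq hI
    (fun s _ => TrigODE.hasDerivAt_weight_comp_mul (r * a) s)
    (fun s _ => TrigODE.hasDerivAt_weightDeriv_comp_mul (r * a) s) hf hf' ht
  simp only [TrigODE.weight] at hleibniz hweighted
  rw [hleibniz]
  linear_combination hweighted

theorem trig_ode_transformation (r a : ℝ) (hr : 0 < r) (ha : 0 < a)
    (I : Set ℝ) (hI : IsOpen I)
    (f f' f'' : ℝ → ℝ)
    (hf : ∀ t ∈ I, HasDerivAt f (f' t) t)
    (hf' : ∀ t ∈ I, HasDerivAt f' (f'' t) t)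
    (hdenom : ∀ t ∈ I,
      2 - 2 * Real.cos (r * a * (1 - (1 - t))) -
        (r * a * (1 - (1 - t))) * Real.sin (r * a * (1 - (1 - t))) ≠ 0)
    (hode : ∀ t ∈ I,
      f'' t
        + (r * a * (r * a * (1 - (1 - t))) * (1 - Real.cos (r * a * (1 - (1 - t)))) /
            (2 - 2 * Real.cos (r * a * (1 - (1 - t))) -
              (r * a * (1 - (1 - t))) * Real.sin (r * a * (1 - (1 - t))))) * f' t
        + (r ^ 2 * a ^ 2 * (1 - Real.cos (r * a * (1 - (1 - t)))) /
            (2 - 2 * Real.cos (r * a * (1 - (1 - t))) -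
              (r * a * (1 - (1 - t))) * Real.sin (r * a * (1 - (1 - t))))) * f t = 0) :
    ∀ t ∈ I,
      deriv (deriv (fun s =>
        ((r * a * (1 - (1 - s))) * Real.cos ((r * a * (1 - (1 - s))) / 2)
          - 2 * Real.sin ((r * a * (1 - (1 - s))) / 2)) * f s)) t
        + (r ^ 2 * a ^ 2 / 4) *
          (((r * a * (1 - (1 - t))) * Real.cos ((r * a * (1 - (1 - t))) / 2)
            - 2 * Real.sin ((r * a * (1 - (1 - t))) / 2)) * f t) = 0 :=
  trig_ode_transformation_general r a I hI f f' f'' hf hf' hdenom hode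
end

section
/- Let T : [0,δ) → Matrix (Fin m) (Fin m) ℝ (symmetric-valued, smooth) satisfy T(0) = 0 and T'(t) = T(t)U + Uᵀ T(t) + T(t) Q(t) T(t) + D, where U, D are constant matrices, D symmetric, and Q is smooth. Then the Taylor expansion of T at 0 is T(t) = tD + (t²/2)(DU + UᵀD) + (t³/3)( (1/2)(DU+UᵀD)U + Uᵀ(1/2)(DU+UᵀD) + D Q(0) D ) + O(t⁴). -/
open Matrix Set Asymptotics

attribute [local instance] Matrix.linftyOpNormedAddCommGroup Matrix.linftyOpNormedSpace
  Matrix.linftyOpNormedRing Matrix.linftyOpNormedAlgebra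

namespace RiccatiAux

variable {m : ℕ}

lemma entry_norm_le (A : Matrix (Fin m) (Fin m) ℝ) (i j : Fin m) : ‖A i j‖ ≤ ‖A‖ := by
  have h1 : ‖A i j‖₊ ≤ ∑ j' : Fin m, ‖A i j'‖₊ :=
    Finset.single_le_sum (f := fun j' => ‖A i j'‖₊) (fun _ _ => zero_le) (Finset.mem_univ j)
  have h2 : (∑ j' : Fin m, ‖A i j'‖₊) ≤ Finset.univ.sup fun i : Fin m => ∑ j' : Fin m, ‖A i j'‖₊ :=
    Finset.le_sup (f := fun i : Fin m => ∑ j' : Fin m, ‖A i j'‖₊) (Finset.mem_univ i)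
  have h := h1.trans h2
  rw [Matrix.linfty_opNorm_def]
  exact_mod_cast h

lemma hasDerivWithinAt_of_entries {F : ℝ → Matrix (Fin m) (Fin m) ℝ}
    {F' : Matrix (Fin m) (Fin m) ℝ} {s : Set ℝ} {t : ℝ}
    (h : ∀ i j, HasDerivWithinAt (fun u => F u i j) (F' i j) s t) :
    HasDerivWithinAt F F' s t := by
  have key : HasDerivWithinAt
      (fun u => ∑ i : Fin m, ∑ j : Fin m, F u i j • single i j (1 : ℝ))
      (∑ i : Fin m, ∑ j : Fin m, F' i j • single i j (1 : ℝ)) s t :=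
    HasDerivWithinAt.fun_sum fun i _ => HasDerivWithinAt.fun_sum fun j _ => (h i j).smul_const _
  have e1 : (fun u => ∑ i : Fin m, ∑ j : Fin m, F u i j • single i j (1 : ℝ)) = F := by
    funext u
    simp_rw [smul_single, smul_eq_mul, mul_one]
    exact (matrix_eq_sum_single (F u)).symm
  have e2 : (∑ i : Fin m, ∑ j : Fin m, F' i j • single i j (1 : ℝ)) = F' := by
    simp_rw [smul_single, smul_eq_mul, mul_one]
    exact (matrix_eq_sum_single F').symm
  rwa [e1, e2] at key

lemma contDiffOn_of_entries {n : WithTop ℕ∞} {F : ℝ → Matrix (Fin m) (Fin m) ℝ} {s : Set ℝ}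
    (h : ∀ i j, ContDiffOn ℝ n (fun u => F u i j) s) :
    ContDiffOn ℝ n F s := by
  have key : ContDiffOn ℝ n
      (fun u => ∑ i : Fin m, ∑ j : Fin m, F u i j • single i j (1 : ℝ)) s :=
    ContDiffOn.sum fun i _ => ContDiffOn.sum fun j _ => (h i j).smul contDiffOn_const
  have e1 : (fun u => ∑ i : Fin m, ∑ j : Fin m, F u i j • single i j (1 : ℝ)) = F := by
    funext u
    simp_rw [smul_single, smul_eq_mul, mul_one]
    exact (matrix_eq_sum_single (F u)).symm
  rwa [e1] at key

end RiccatiAux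

open RiccatiAux

theorem riccati_taylor_expansion (m : ℕ) (δ : ℝ) (hδ : 0 < δ)
    (T T' Q : ℝ → Matrix (Fin m) (Fin m) ℝ)
    (U D : Matrix (Fin m) (Fin m) ℝ) (hD : Dᵀ = D)
    (hTsmooth : ∀ i j, ContDiffOn ℝ (⊤ : ℕ∞) (fun t => T t i j) (Ico 0 δ))
    (hQsmooth : ∀ i j, ContDiffOn ℝ (⊤ : ℕ∞) (fun t => Q t i j) (Ico 0 δ))
    (hsymm : ∀ t ∈ Ico (0:ℝ) δ, (T t).IsSymm)
    (hT0 : T 0 = 0)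
    (hderiv : ∀ t ∈ Ico (0:ℝ) δ, ∀ i j,
      HasDerivWithinAt (fun s => T s i j) (T' t i j) (Ico 0 δ) t)
    (hode : ∀ t ∈ Ico (0:ℝ) δ,
      T' t = T t * U + Uᵀ * T t + T t * Q t * T t + D) :
    ∀ i j,
      (fun t : ℝ => T t i j -
          (t • D + (t ^ 2 / 2) • (D * U + Uᵀ * D) +
            (t ^ 3 / 3) • ((1 / 2 : ℝ) • (D * U + Uᵀ * D) * U +
              Uᵀ * ((1 / 2 : ℝ) • (D * U + Uᵀ * D)) + D * Q 0 * D)) i j)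
        =O[nhdsWithin 0 (Ico 0 δ)] fun t => t ^ 4 := by
  have hc : (0:ℝ) < δ/2 := by linarith
  set s : Set ℝ := Icc 0 (δ/2) with hs
  have hsub : s ⊆ Ico 0 δ := fun x hx => ⟨hx.1, lt_of_le_of_lt hx.2 (by linarith)⟩
  have h0s : (0:ℝ) ∈ s := ⟨le_refl _, hc.le⟩
  have uds : UniqueDiffOn ℝ s := uniqueDiffOn_Icc hc
  -- matrix-level derivative of T
  have hT : ∀ t ∈ s, HasDerivWithinAt T (T' t) s t := fun t ht =>
    hasDerivWithinAt_of_entries fun i j => (hderiv t (hsub ht) i j).mono hsub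
  -- derivative of Q
  set Q1 : ℝ → Matrix (Fin m) (Fin m) ℝ :=
    fun t => Matrix.of fun i j => derivWithin (fun u => Q u i j) s t with hQ1def
  have hQentry : ∀ i j, ContDiffOn ℝ (⊤ : ℕ∞) (fun u => Q u i j) s := fun i j =>
    (hQsmooth i j).mono hsub
  have hQ : ∀ t ∈ s, HasDerivWithinAt Q (Q1 t) s t := fun t ht =>
    hasDerivWithinAt_of_entries fun i j =>
      ((hQentry i j).differentiableOn (by simp) t ht).hasDerivWithinAt
  have hQ1entry : ∀ i j, ContDiffOn ℝ (⊤ : ℕ∞) (fun u => Q1 u i j) s := fun i j =>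
    (hQentry i j).derivWithin uds (by simp)
  set Q2 : Matrix (Fin m) (Fin m) ℝ :=
    Matrix.of fun i j => derivWithin (fun u => Q1 u i j) s 0 with hQ2def
  have hQ1d : HasDerivWithinAt Q1 Q2 s 0 :=
    hasDerivWithinAt_of_entries fun i j =>
      ((hQ1entry i j).differentiableOn (by simp) 0 h0s).hasDerivWithinAt
  -- second derivative of T
  set T2 : ℝ → Matrix (Fin m) (Fin m) ℝ := fun t =>
    T' t * U + Uᵀ * T' t + ((T' t * Q t + T t * Q1 t) * T t + T t * Q t * T' t) with hT2def
  have hG : ∀ t ∈ s, HasDerivWithinAt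
      (fun u => T u * U + Uᵀ * T u + T u * Q u * T u + D) (T2 t) s t := fun t ht =>
    ((((hT t ht).mul_const U).add ((hT t ht).const_mul Uᵀ)).add
      (((hT t ht).mul (hQ t ht)).mul (hT t ht))).add_const D
  have hT'd : ∀ t ∈ s, HasDerivWithinAt T' (T2 t) s t := fun t ht =>
    (hG t ht).congr (fun u hu => hode u (hsub hu)) (hode t (hsub ht))
  -- third derivative of T at 0
  have hT2d : HasDerivWithinAt T2
      (T2 0 * U + Uᵀ * T2 0 +
        (((T2 0 * Q 0 + T' 0 * Q1 0 + (T' 0 * Q1 0 + T 0 * Q2)) * T 0 +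
            (T' 0 * Q 0 + T 0 * Q1 0) * T' 0) +
          ((T' 0 * Q 0 + T 0 * Q1 0) * T' 0 + T 0 * Q 0 * T2 0))) s 0 :=
    (((hT'd 0 h0s).mul_const U).add ((hT'd 0 h0s).const_mul Uᵀ)).add
      (((((hT'd 0 h0s).mul (hQ 0 h0s)).add ((hT 0 h0s).mul hQ1d)).mul (hT 0 h0s)).add
        (((hT 0 h0s).mul (hQ 0 h0s)).mul (hT'd 0 h0s)))
  -- values at 0
  have hT'0 : T' 0 = D := by
    have h := hode 0 ⟨le_refl _, hδ⟩
    rw [hT0] at h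
    simpa using h
  have hT20 : T2 0 = D * U + Uᵀ * D := by
    rw [hT2def]
    simp [hT0, hT'0]
  have hT2d' : HasDerivWithinAt T2
      ((D * U + Uᵀ * D) * U + Uᵀ * (D * U + Uᵀ * D) + (D * Q 0 * D + D * Q 0 * D)) s 0 := by
    convert hT2d using 1
    rw [hT20, hT0, hT'0]
    noncomm_ring
  -- iterated derivatives within s at 0
  have hiter1 : ∀ u ∈ s, iteratedDerivWithin 1 T s u = T' u := fun u hu => by
    rw [iteratedDerivWithin_one]
    exact (hT u hu).derivWithin (uds u hu)
  have hiter2 : ∀ u ∈ s, iteratedDerivWithin 2 T s u = T2 u := fun u hu => by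
    rw [show (2:ℕ) = 1 + 1 from rfl, iteratedDerivWithin_succ,
      derivWithin_congr hiter1 (hiter1 u hu)]
    exact (hT'd u hu).derivWithin (uds u hu)
  have hiter3 : iteratedDerivWithin 3 T s 0 =
      (D * U + Uᵀ * D) * U + Uᵀ * (D * U + Uᵀ * D) + (D * Q 0 * D + D * Q 0 * D) := by
    rw [show (3:ℕ) = 2 + 1 from rfl, iteratedDerivWithin_succ,
      derivWithin_congr hiter2 (hiter2 0 h0s)]
    exact hT2d'.derivWithin (uds 0 h0s)
  -- Taylor polynomial identification
  have htaylor : ∀ t : ℝ, taylorWithinEval T 3 s 0 t =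
      t • D + (t ^ 2 / 2) • (D * U + Uᵀ * D) +
        (t ^ 3 / 3) • ((1 / 2 : ℝ) • (D * U + Uᵀ * D) * U +
          Uᵀ * ((1 / 2 : ℝ) • (D * U + Uᵀ * D)) + D * Q 0 * D) := by
    intro t
    rw [taylor_within_apply]
    rw [Finset.sum_range_succ, Finset.sum_range_succ, Finset.sum_range_succ,
      Finset.sum_range_one]
    rw [iteratedDerivWithin_zero, hT0, hiter1 0 h0s, hT'0, hiter2 0 h0s, hT20, hiter3]
    rw [smul_mul_assoc, mul_smul_comm]
    norm_num [Nat.factorial]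
    module
  -- Taylor remainder bound
  have hTc' : ContDiffOn ℝ (⊤ : ℕ∞) T s :=
    contDiffOn_of_entries fun i j => (hTsmooth i j).mono hsub
  have hTc : ContDiffOn ℝ (3+1 : ℕ) T s := hTc'.of_le (WithTop.coe_le_coe.mpr le_top)
  obtain ⟨C, hC⟩ := exists_taylor_mean_remainder_bound hc.le hTc
  -- conclude
  intro i j
  rw [isBigO_iff]
  refine ⟨C, ?_⟩
  have hev : ∀ᶠ t in nhdsWithin 0 (Ico 0 δ), t ∈ s := by
    have h1 : Ioo (-(δ/2)) (δ/2) ∈ nhds (0:ℝ) := Ioo_mem_nhds (by linarith) hc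
    filter_upwards [mem_nhdsWithin_of_mem_nhds h1, self_mem_nhdsWithin] with t ht1 ht2
    exact ⟨ht2.1, ht1.2.le⟩
  filter_upwards [hev] with t ht
  have key := hC t ht
  rw [htaylor t] at key
  have : T t i j -
      (t • D + (t ^ 2 / 2) • (D * U + Uᵀ * D) +
        (t ^ 3 / 3) • ((1 / 2 : ℝ) • (D * U + Uᵀ * D) * U +
          Uᵀ * ((1 / 2 : ℝ) • (D * U + Uᵀ * D)) + D * Q 0 * D)) i j =
      (T t - (t • D + (t ^ 2 / 2) • (D * U + Uᵀ * D) +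
        (t ^ 3 / 3) • ((1 / 2 : ℝ) • (D * U + Uᵀ * D) * U +
          Uᵀ * ((1 / 2 : ℝ) • (D * U + Uᵀ * D)) + D * Q 0 * D))) i j := by
    simp [Matrix.sub_apply]
  rw [this]
  calc ‖(T t - (t • D + (t ^ 2 / 2) • (D * U + Uᵀ * D) +
        (t ^ 3 / 3) • ((1 / 2 : ℝ) • (D * U + Uᵀ * D) * U +
          Uᵀ * ((1 / 2 : ℝ) • (D * U + Uᵀ * D)) + D * Q 0 * D))) i j‖
      ≤ ‖T t - (t • D + (t ^ 2 / 2) • (D * U + Uᵀ * D) +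
        (t ^ 3 / 3) • ((1 / 2 : ℝ) • (D * U + Uᵀ * D) * U +
          Uᵀ * ((1 / 2 : ℝ) • (D * U + Uᵀ * D)) + D * Q 0 * D))‖ := entry_norm_le _ i j
    _ ≤ C * (t - 0) ^ (3 + 1) := key
    _ = C * ‖t ^ 4‖ := by
        rw [sub_zero, Real.norm_eq_abs, abs_pow, abs_of_nonneg ht.1]
end
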